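/- Let E ⊆ ℝ^d be a nonempty granular set with critical thickness ϑ(E). Then there exists a finite collection 𝒬₁ of dyadic cubes such that ϑ(E)·λ(E) = 2·ϑ(E)·∑_{Q ∈ 𝒬₁} l(Q) + |E \ ∪_{Q ∈ 𝒬₁} Q|, and moreover the set E_* = E \ ∪_{Q ∈ 𝒬₁} Q satisfies Θ(E_*) ≤ 2·ϑ(E). -/

import Mathlib

open MeasureTheory Set

/-- A dyadic cube in `ℝ^d`, given by a scale `k ∈ ℤ` and a corner `m ∈ ℤ^d`;
it represents the set `∏_i [2^k m_i, 2^k (m_i + 1))`. -/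
structure DyadicCube (d : ℕ) where
  k : ℤ
  m : Fin d → ℤ

namespace DyadicCube

/-- The subset of `ℝ^d` determined by a dyadic cube. -/
def carrier {d : ℕ} (Q : DyadicCube d) : Set (EuclideanSpace ℝ (Fin d)) :=
  {x | ∀ i, (2 : ℝ) ^ Q.k * Q.m i ≤ x i ∧ x i < (2 : ℝ) ^ Q.k * (Q.m i + 1)}

/-- The side-length `l(Q) = 2^k` of a dyadic cube. -/
noncomputable def len {d : ℕ} (Q : DyadicCube d) : ℝ := (2 : ℝ) ^ Q.k

end DyadicCube

/-- A set is granular if it is a finite union of dyadic cubes. -/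
def Granular {d : ℕ} (E : Set (EuclideanSpace ℝ (Fin d))) : Prop :=
  ∃ 𝒬 : Finset (DyadicCube d), E = ⋃ Q ∈ 𝒬, Q.carrier

/-- The (dyadic one-dimensional Hausdorff content, or) length `λ(E)`: the infimum of
`∑_{Q ∈ 𝒬} l(Q)` over all finite collections `𝒬` of dyadic cubes covering `E`. -/
noncomputable def dyadicLength {d : ℕ} (E : Set (EuclideanSpace ℝ (Fin d))) : ℝ :=
  sInf {s | ∃ 𝒬 : Finset (DyadicCube d),
    (E ⊆ ⋃ Q ∈ 𝒬, Q.carrier) ∧ s = ∑ Q ∈ 𝒬, Q.len}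

/-- The thickness `Θ(E)`: the supremum of `|E ∩ Q| / l(Q)` over all dyadic cubes `Q`. -/
noncomputable def thickness {d : ℕ} (E : Set (EuclideanSpace ℝ (Fin d))) : ℝ :=
  sSup {t | ∃ Q : DyadicCube d, t = (volume (E ∩ Q.carrier)).toReal / Q.len}

/-- The critical thickness `ϑ(E)`: the largest `r ≥ 0` such that
`r·λ(E) ≤ 2r·∑_{Q ∈ 𝒬} l(Q) + |E \ ∪_{Q ∈ 𝒬} Q|` for all finite collections `𝒬`
of dyadic cubes (the empty collection being allowed). -/
noncomputable def criticalThickness {d : ℕ} (E : Set (EuclideanSpace ℝ (Fin d))) : ℝ :=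
  sSup {r | 0 ≤ r ∧ ∀ 𝒬 : Finset (DyadicCube d),
    r * dyadicLength E ≤ 2 * r * (∑ Q ∈ 𝒬, Q.len) +
      (volume (E \ ⋃ Q ∈ 𝒬, Q.carrier)).toReal}

/-!
Write `coverCost E r 𝒬 = 2r·∑_{Q ∈ 𝒬} l(Q) + |E \ ∪ 𝒬|`, so that `ϑ(E)` is the largest `r ≥ 0`
with `r·λ(E) ≤ coverCost E r 𝒬` for all `𝒬`. Once `coverCost E ϑ` attains its minimum at some
`𝒬₁`, both claims follow: were `coverCost E ϑ 𝒬₁ > ϑ·λ(E)`, the ratio `coverCost E ϑ 𝒬₁ / λ(E)`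
would be admissible and exceed `ϑ`; and comparing `𝒬₁` with `𝒬₁ ∪ {Q}` gives
`|E_* ∩ Q| ≤ 2ϑ·l(Q)`.

The minimum exists because only finitely many collections matter. Let `2 ^ k₀` be the smallest
side-length of the cubes making up `E`. Dropping a cube `Q` with `|E ∩ Q| ≤ 2r·l(Q)` never
increases the cost; this disposes of all cubes missing `E`, of all cubes that are too large, and,
when `2r ≥ 2 ^ (k₀(d-1))`, of all cubes smaller than `2 ^ k₀`. When `2r < 2 ^ (k₀(d-1))`, the
small cubes inside a cube `C ⊆ E` of side `2 ^ k₀` may instead be replaced by `C`, because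
`|Q| ≤ l(Q)·l(C)^(d-1)`. The surviving cubes have side-lengths in a bounded range and each meets
`E` in measure more than `2r·l(Q)`, so there are finitely many of them.
-/

lemma floor_div_two_zpow_of_le {k k' : ℤ} (h : k ≤ k') (z : ℝ) :
    ⌊z / 2 ^ k'⌋ = ⌊z / 2 ^ k⌋ / 2 ^ (k' - k).toNat := by
  have : (2 : ℝ) ^ k' = 2 ^ k * ((2 ^ (k' - k).toNat : ℕ) : ℝ) := by
    rw [Nat.cast_pow, Nat.cast_ofNat, ← zpow_natCast, ← zpow_add₀ two_ne_zero]
    congr 1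
    omega
  rw [this, ← div_div, Int.floor_div_natCast]
  norm_cast

namespace DyadicCube

variable {d : ℕ}

lemma len_pos (Q : DyadicCube d) : 0 < Q.len := zpow_pos two_pos _

lemma mem_carrier_iff {Q : DyadicCube d} {x : EuclideanSpace ℝ (Fin d)} :
    x ∈ Q.carrier ↔ ∀ i, ⌊x i / 2 ^ Q.k⌋ = Q.m i := by
  have h : (0 : ℝ) < 2 ^ Q.k := zpow_pos two_pos _
  refine forall_congr' fun i => ?_
  rw [Int.floor_eq_iff, le_div_iff₀ h, div_lt_iff₀ h, mul_comm, mul_comm (_ + 1 : ℝ)]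

noncomputable def cubeAt (k : ℤ) (x : EuclideanSpace ℝ (Fin d)) : DyadicCube d :=
  ⟨k, fun i => ⌊x i / 2 ^ k⌋⟩

lemma mem_cubeAt (k : ℤ) (x : EuclideanSpace ℝ (Fin d)) : x ∈ (cubeAt k x).carrier :=
  mem_carrier_iff.2 fun _ => rfl

lemma eq_of_mem_of_mem {Q Q' : DyadicCube d} (hk : Q.k = Q'.k) {x : EuclideanSpace ℝ (Fin d)}
    (hx : x ∈ Q.carrier) (hx' : x ∈ Q'.carrier) : Q = Q' := by
  obtain ⟨k, m⟩ := Q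
  obtain ⟨k', m'⟩ := Q'
  obtain rfl : k = k' := hk
  congr
  funext i
  exact (mem_carrier_iff.1 hx i).symm.trans (mem_carrier_iff.1 hx' i)

lemma carrier_subset_of_mem_of_mem {Q Q' : DyadicCube d} (hk : Q.k ≤ Q'.k)
    {x : EuclideanSpace ℝ (Fin d)} (hx : x ∈ Q.carrier) (hx' : x ∈ Q'.carrier) :
    Q.carrier ⊆ Q'.carrier := by
  intro y hy
  rw [mem_carrier_iff] at hx hx' hy ⊢
  intro i
  rw [floor_div_two_zpow_of_le hk, hy i, ← hx i, ← floor_div_two_zpow_of_le hk, hx' i]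

lemma disjoint_carrier_of_ne {Q Q' : DyadicCube d} (hk : Q.k = Q'.k) (hne : Q ≠ Q') :
    Disjoint Q.carrier Q'.carrier :=
  Set.disjoint_left.2 fun _ hx hx' => hne (eq_of_mem_of_mem hk hx hx')

lemma carrier_eq_preimage_pi (Q : DyadicCube d) :
    Q.carrier = (MeasurableEquiv.toLp 2 (Fin d → ℝ)).symm ⁻¹'
      Set.univ.pi fun i => Set.Ico (2 ^ Q.k * Q.m i) (2 ^ Q.k * (Q.m i + 1)) := by
  ext x
  simp only [Set.mem_preimage, Set.mem_univ_pi, Set.mem_Ico]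
  rfl

lemma measurableSet_carrier (Q : DyadicCube d) : MeasurableSet Q.carrier := by
  rw [carrier_eq_preimage_pi]
  exact (MeasurableEquiv.toLp 2 (Fin d → ℝ)).symm.measurable
    (MeasurableSet.univ_pi fun _ => measurableSet_Ico)

lemma volume_carrier (Q : DyadicCube d) :
    volume Q.carrier = ENNReal.ofReal (Q.len ^ d) := by
  rw [carrier_eq_preimage_pi,
    (EuclideanSpace.volume_preserving_symm_measurableEquiv_toLp (Fin d)).measure_preimage
      (MeasurableSet.univ_pi fun _ => measurableSet_Ico).nullMeasurableSet,
    volume_pi_pi]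
  simp_rw [Real.volume_Ico, mul_add_one, add_sub_cancel_left]
  rw [Finset.prod_const, Finset.card_univ, Fintype.card_fin,
    ← ENNReal.ofReal_pow (zpow_pos two_pos _).le]
  rfl

lemma volume_carrier_ne_top (Q : DyadicCube d) : volume Q.carrier ≠ ⊤ := by
  simp [volume_carrier]

lemma volume_carrier_toReal (Q : DyadicCube d) : (volume Q.carrier).toReal = Q.len ^ d := by
  rw [volume_carrier, ENNReal.toReal_ofReal (pow_nonneg (len_pos Q).le d)]

instance : DecidableEq (DyadicCube d) := fun Q Q' =>
  decidable_of_iff (Q.k = Q'.k ∧ Q.m = Q'.m) <| by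
    cases Q
    cases Q'
    simp

lemma sum_len_nonneg (𝒬 : Finset (DyadicCube d)) : 0 ≤ ∑ Q ∈ 𝒬, Q.len :=
  Finset.sum_nonneg fun Q _ => (len_pos Q).le

lemma sum_len_insert_le (Q : DyadicCube d) (𝒬 : Finset (DyadicCube d)) :
    ∑ Q' ∈ insert Q 𝒬, Q'.len ≤ Q.len + ∑ Q' ∈ 𝒬, Q'.len := by
  by_cases h : Q ∈ 𝒬
  · rw [Finset.insert_eq_of_mem h]
    linarith [len_pos Q]
  · rw [Finset.sum_insert h]

lemma len_pow_le_mul {Q : DyadicCube d} {c : ℝ} (hd : 0 < d) (h : Q.len ≤ c) :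
    Q.len ^ d ≤ c ^ (d - 1) * Q.len := by
  rw [← pow_sub_one_mul hd.ne']
  exact mul_le_mul_of_nonneg_right (pow_le_pow_left₀ (len_pos Q).le h _) (len_pos Q).le

lemma measurableSet_biUnion_carrier (𝒬 : Finset (DyadicCube d)) :
    MeasurableSet (⋃ Q ∈ 𝒬, Q.carrier) :=
  Finset.measurableSet_biUnion _ fun Q _ => measurableSet_carrier Q

lemma volume_biUnion_carrier_ne_top (𝒬 : Finset (DyadicCube d)) :
    volume (⋃ Q ∈ 𝒬, Q.carrier) ≠ ⊤ :=
  ((measure_biUnion_finset_le _ _).trans_lt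
    (ENNReal.sum_lt_top.2 fun Q _ => (volume_carrier_ne_top Q).lt_top)).ne

end DyadicCube

open DyadicCube

section CoverCost

variable {d : ℕ} (E : Set (EuclideanSpace ℝ (Fin d)))

noncomputable def coverCost (r : ℝ) (𝒬 : Finset (DyadicCube d)) : ℝ :=
  2 * r * ∑ Q ∈ 𝒬, Q.len + volume.real (E \ ⋃ Q ∈ 𝒬, Q.carrier)

lemma coverCost_nonneg {r : ℝ} (hr : 0 ≤ r) (𝒬 : Finset (DyadicCube d)) :
    0 ≤ coverCost E r 𝒬 :=
  add_nonneg (mul_nonneg (by positivity) (sum_len_nonneg 𝒬)) measureReal_nonneg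

lemma coverCost_mono {r r' : ℝ} (h : r ≤ r') (𝒬 : Finset (DyadicCube d)) :
    coverCost E r 𝒬 ≤ coverCost E r' 𝒬 := by
  unfold coverCost
  gcongr
  exact sum_len_nonneg 𝒬

lemma criticalThickness_nonneg : 0 ≤ criticalThickness E :=
  Real.sSup_nonneg fun _ hr => hr.1

lemma dyadicLength_nonneg : 0 ≤ dyadicLength E :=
  Real.sInf_nonneg <| by
    rintro _ ⟨𝒬, -, rfl⟩
    exact sum_len_nonneg 𝒬

/-- If `λ(E) = 0`, every `r ≥ 0` is admissible, and `sSup` of that unbounded set is `0`. -/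
lemma dyadicLength_pos_of_criticalThickness_pos (h : 0 < criticalThickness E) :
    0 < dyadicLength E := by
  refine (dyadicLength_nonneg E).lt_of_ne fun h0 => h.ne' (Real.sSup_of_not_bddAbove ?_)
  rintro ⟨b, hb⟩
  have hmem : max b 0 + 1 ∈ {r | 0 ≤ r ∧ ∀ 𝒬, r * dyadicLength E ≤ coverCost E r 𝒬} :=
    ⟨by positivity, fun 𝒬 => by rw [← h0, mul_zero]; exact coverCost_nonneg E (by positivity) 𝒬⟩
  linarith [hb hmem, le_max_left b 0]

lemma mul_dyadicLength_le_coverCost (𝒬 : Finset (DyadicCube d)) :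
    criticalThickness E * dyadicLength E ≤ coverCost E (criticalThickness E) 𝒬 := by
  have hϑ := criticalThickness_nonneg E
  unfold coverCost
  rcases le_or_gt (dyadicLength E) (2 * ∑ Q ∈ 𝒬, Q.len) with h | h
  · nlinarith [mul_le_mul_of_nonneg_left h hϑ, measureReal_nonneg (μ := volume)
      (s := E \ ⋃ Q ∈ 𝒬, Q.carrier)]
  · have hb : criticalThickness E ≤
        volume.real (E \ ⋃ Q ∈ 𝒬, Q.carrier) / (dyadicLength E - 2 * ∑ Q ∈ 𝒬, Q.len) := by
      refine csSup_le ⟨0, le_rfl, fun 𝒬' => ?_⟩ fun r hr => ?_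
      · simp only [zero_mul, mul_zero, zero_add]
        exact ENNReal.toReal_nonneg
      · have hr𝒬 : r * dyadicLength E ≤ coverCost E r 𝒬 := hr.2 𝒬
        rw [coverCost] at hr𝒬
        rw [le_div_iff₀ (sub_pos.2 h)]
        linarith
    rw [le_div_iff₀ (sub_pos.2 h)] at hb
    linarith

lemma le_criticalThickness (hL : 0 < dyadicLength E) {r : ℝ} (hr : 0 ≤ r)
    (h : ∀ 𝒬, r * dyadicLength E ≤ coverCost E r 𝒬) : r ≤ criticalThickness E := by
  refine le_csSup ⟨volume.real E / dyadicLength E, fun r' hr' => ?_⟩ ⟨hr, h⟩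
  rw [le_div_iff₀ hL]
  simpa [measureReal_def] using hr'.2 ∅

lemma criticalThickness_mul_dyadicLength_eq (hL : 0 < dyadicLength E)
    {𝒬₁ : Finset (DyadicCube d)}
    (hmin : ∀ 𝒬, coverCost E (criticalThickness E) 𝒬₁ ≤ coverCost E (criticalThickness E) 𝒬) :
    criticalThickness E * dyadicLength E = coverCost E (criticalThickness E) 𝒬₁ := by
  refine le_antisymm (mul_dyadicLength_le_coverCost E 𝒬₁) ((div_le_iff₀ hL).1 ?_)
  have hϑ : criticalThickness E ≤ coverCost E (criticalThickness E) 𝒬₁ / dyadicLength E :=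
    (le_div_iff₀ hL).2 (mul_dyadicLength_le_coverCost E 𝒬₁)
  refine le_criticalThickness E hL (div_nonneg (coverCost_nonneg E
    (criticalThickness_nonneg E) 𝒬₁) hL.le) fun 𝒬 => ?_
  rw [div_mul_cancel₀ _ hL.ne']
  exact (hmin 𝒬).trans (coverCost_mono E hϑ 𝒬)

lemma thickness_sdiff_le_of_forall_coverCost_le (hE : volume E ≠ ⊤) {r : ℝ} (hr : 0 ≤ r)
    {𝒬₁ : Finset (DyadicCube d)} (hmin : ∀ 𝒬, coverCost E r 𝒬₁ ≤ coverCost E r 𝒬) :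
    thickness (E \ ⋃ Q ∈ 𝒬₁, Q.carrier) ≤ 2 * r := by
  refine Real.sSup_le ?_ (by positivity)
  rintro _ ⟨Q, rfl⟩
  rw [div_le_iff₀ (len_pos Q)]
  set X := E \ ⋃ Q ∈ 𝒬₁, Q.carrier
  have hsplit : volume.real (X ∩ Q.carrier) + volume.real (X \ Q.carrier) = volume.real X :=
    measureReal_inter_add_sdiff (measurableSet_carrier Q) (measure_ne_top_of_subset sdiff_subset hE)
  have hinsert : E \ ⋃ Q' ∈ insert Q 𝒬₁, Q'.carrier = X \ Q.carrier := by
    rw [Finset.set_biUnion_insert, union_comm, ← sdiff_sdiff]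
  have h := hmin (insert Q 𝒬₁)
  rw [coverCost, coverCost, hinsert] at h
  have := mul_le_mul_of_nonneg_left (sum_len_insert_le Q 𝒬₁) (by positivity : (0 : ℝ) ≤ 2 * r)
  change volume.real (X ∩ Q.carrier) ≤ _
  nlinarith

end CoverCost

section FineCubes

variable {d : ℕ}

open Classical in
noncomputable def fineCubes (k : ℤ) (E : Set (EuclideanSpace ℝ (Fin d)))
    (𝒬 : Finset (DyadicCube d)) : Finset (DyadicCube d) :=
  𝒬.filter fun Q => Q.k < k ∧ ¬Disjoint Q.carrier E

variable {k : ℤ} {E : Set (EuclideanSpace ℝ (Fin d))} {𝒬 : Finset (DyadicCube d)}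

lemma mem_fineCubes {Q : DyadicCube d} :
    Q ∈ fineCubes k E 𝒬 ↔ Q ∈ 𝒬 ∧ Q.k < k ∧ ¬Disjoint Q.carrier E := by
  classical
  exact Finset.mem_filter

lemma fineCubes_subset : fineCubes k E 𝒬 ⊆ 𝒬 :=
  fun _ hQ => (mem_fineCubes.1 hQ).1

end FineCubes

section Exchange

variable {d : ℕ} {E : Set (EuclideanSpace ℝ (Fin d))} {r : ℝ}

lemma coverCost_filter_le (hE : volume E ≠ ⊤) (𝒬 : Finset (DyadicCube d))
    (p : DyadicCube d → Prop) [DecidablePred p]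
    (h : ∀ Q ∈ 𝒬, ¬p Q → volume.real (E ∩ Q.carrier) ≤ 2 * r * Q.len) :
    coverCost E r (𝒬.filter p) ≤ coverCost E r 𝒬 := by
  set 𝒟 := 𝒬.filter fun Q => ¬p Q
  have hcover : E \ ⋃ Q ∈ 𝒬.filter p, Q.carrier ⊆
      (E \ ⋃ Q ∈ 𝒬, Q.carrier) ∪ ⋃ Q ∈ 𝒟, E ∩ Q.carrier := by
    intro x ⟨hxE, hx⟩
    by_cases hx𝒬 : x ∈ ⋃ Q ∈ 𝒬, Q.carrier
    · obtain ⟨Q, hQ, hxQ⟩ := mem_iUnion₂.1 hx𝒬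
      have hpQ : ¬p Q := fun hpQ => hx (mem_biUnion (Finset.mem_filter.2 ⟨hQ, hpQ⟩) hxQ)
      exact Or.inr (mem_biUnion (Finset.mem_filter.2 ⟨hQ, hpQ⟩) ⟨hxE, hxQ⟩)
    · exact Or.inl ⟨hxE, hx𝒬⟩
  have hvol : volume.real (E \ ⋃ Q ∈ 𝒬.filter p, Q.carrier) ≤
      volume.real (E \ ⋃ Q ∈ 𝒬, Q.carrier) + ∑ Q ∈ 𝒟, volume.real (E ∩ Q.carrier) :=
    (measureReal_mono hcover (measure_ne_top_of_subset
        (union_subset sdiff_subset (iUnion₂_subset fun _ _ => inter_subset_left)) hE)).trans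
      ((measureReal_union_le _ _).trans (add_le_add le_rfl (measureReal_biUnion_finset_le _ _)))
  have h𝒟 : ∑ Q ∈ 𝒟, volume.real (E ∩ Q.carrier) ≤ 2 * r * ∑ Q ∈ 𝒟, Q.len := by
    rw [Finset.mul_sum]
    exact Finset.sum_le_sum fun Q hQ => h Q (Finset.mem_filter.1 hQ).1 (Finset.mem_filter.1 hQ).2
  have hsum := Finset.sum_filter_add_sum_filter_not 𝒬 p DyadicCube.len
  unfold coverCost
  rw [← hsum, mul_add]
  linarith

lemma coverCost_le_of_subset (hr : 0 ≤ r) {𝒬' 𝒬 : Finset (DyadicCube d)} (h : 𝒬' ⊆ 𝒬)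
    (hU : ⋃ Q ∈ 𝒬, Q.carrier ⊆ ⋃ Q ∈ 𝒬', Q.carrier) :
    coverCost E r 𝒬' ≤ coverCost E r 𝒬 := by
  have hU' : ⋃ Q ∈ 𝒬', Q.carrier = ⋃ Q ∈ 𝒬, Q.carrier :=
    (biUnion_subset_biUnion_left h).antisymm hU
  unfold coverCost
  rw [hU']
  gcongr
  exact fun Q _ _ => (len_pos Q).le

lemma two_mul_len_le_coverCost_carrier (hd : 0 < d) (hr : 0 ≤ r) {C : DyadicCube d}
    (h2r : 2 * r ≤ C.len ^ (d - 1)) {𝒮 : Finset (DyadicCube d)}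
    (hlen : ∀ Q ∈ 𝒮, Q.len ≤ C.len) :
    2 * r * C.len ≤ coverCost C.carrier r 𝒮 := by
  set L := ∑ Q ∈ 𝒮, Q.len
  have hvol : C.len ^ (d - 1) * C.len - C.len ^ (d - 1) * L ≤
      volume.real (C.carrier \ ⋃ Q ∈ 𝒮, Q.carrier) :=
    calc C.len ^ (d - 1) * C.len - C.len ^ (d - 1) * L
        ≤ volume.real C.carrier - ∑ Q ∈ 𝒮, volume.real Q.carrier := by
          rw [pow_sub_one_mul hd.ne', Finset.mul_sum]
          refine sub_le_sub (volume_carrier_toReal C).ge (Finset.sum_le_sum fun Q hQ => ?_)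
          exact (volume_carrier_toReal Q).trans_le (len_pow_le_mul hd (hlen Q hQ))
      _ ≤ volume.real C.carrier - volume.real (⋃ Q ∈ 𝒮, Q.carrier) :=
          sub_le_sub_left (measureReal_biUnion_finset_le _ _) _
      _ ≤ volume.real (C.carrier \ ⋃ Q ∈ 𝒮, Q.carrier) :=
          le_measureReal_sdiff (volume_biUnion_carrier_ne_top 𝒮)
  unfold coverCost
  rcases le_total L C.len with hL | hL
  · nlinarith [mul_le_mul_of_nonneg_right h2r (sub_nonneg.2 hL)]
  · nlinarith [mul_le_mul_of_nonneg_left hL (by positivity : (0 : ℝ) ≤ 2 * r),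
      measureReal_nonneg (μ := volume) (s := C.carrier \ ⋃ Q ∈ 𝒮, Q.carrier)]

lemma coverCost_insert_sdiff_le (hE : volume E ≠ ⊤) (hd : 0 < d) (hr : 0 ≤ r)
    {C : DyadicCube d} (hCE : C.carrier ⊆ E) (h2r : 2 * r ≤ C.len ^ (d - 1))
    {𝒬 𝒮 : Finset (DyadicCube d)} (h𝒮 : 𝒮 ⊆ 𝒬) (hlen : ∀ Q ∈ 𝒮, Q.len ≤ C.len)
    (hS : ⋃ Q ∈ 𝒮, Q.carrier ⊆ C.carrier) (hA : Disjoint C.carrier (⋃ Q ∈ 𝒬 \ 𝒮, Q.carrier)) :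
    coverCost E r (insert C (𝒬 \ 𝒮)) ≤ coverCost E r 𝒬 := by
  set A := ⋃ Q ∈ 𝒬 \ 𝒮, Q.carrier
  set U := ⋃ Q ∈ 𝒮, Q.carrier
  have hunion : ⋃ Q ∈ 𝒬, Q.carrier = A ∪ U := by
    rw [← Finset.set_biUnion_union, Finset.sdiff_union_of_subset h𝒮]
  have hsplit : E \ (A ∪ U) = E \ (C.carrier ∪ A) ∪ C.carrier \ U := by
    ext x
    simp only [mem_union, mem_sdiff]
    constructor
    · rintro ⟨hxE, hx⟩
      by_cases hxC : x ∈ C.carrier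
      · exact Or.inr ⟨hxC, fun hxU => hx (Or.inr hxU)⟩
      · exact Or.inl ⟨hxE, fun h => h.elim hxC fun hxA => hx (Or.inl hxA)⟩
    · rintro (⟨hxE, hx⟩ | ⟨hxC, hxU⟩)
      · exact ⟨hxE, fun h => h.elim (fun hxA => hx (Or.inr hxA)) fun hxU => hx (Or.inl (hS hxU))⟩
      · exact ⟨hCE hxC, fun h => h.elim (disjoint_left.1 hA hxC) hxU⟩
  have hvol : volume.real (E \ (A ∪ U)) =
      volume.real (E \ (C.carrier ∪ A)) + volume.real (C.carrier \ U) := by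
    have hdisj : Disjoint (E \ (C.carrier ∪ A)) (C.carrier \ U) :=
      disjoint_left.2 fun _ hx hx' => hx.2 (Or.inl hx'.1)
    rw [hsplit, measureReal_union hdisj ((measurableSet_carrier C).diff
        (measurableSet_biUnion_carrier 𝒮)) (measure_ne_top_of_subset sdiff_subset hE)
      (measure_ne_top_of_subset sdiff_subset (volume_carrier_ne_top C))]
  have hC := two_mul_len_le_coverCost_carrier hd hr h2r hlen
  have hsum := Finset.sum_sdiff h𝒮 (f := DyadicCube.len)
  have hins := mul_le_mul_of_nonneg_left (sum_len_insert_le C (𝒬 \ 𝒮))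
    (by positivity : (0 : ℝ) ≤ 2 * r)
  unfold coverCost at hC ⊢
  rw [Finset.set_biUnion_insert, hunion, hvol, ← hsum]
  nlinarith

lemma exists_coverCost_le_subset_insert_sdiff (hE : volume E ≠ ⊤) (hd : 0 < d) (hr : 0 ≤ r)
    {C : DyadicCube d} (hCE : C.carrier ⊆ E) (h2r : 2 * r ≤ C.len ^ (d - 1))
    (𝒬 : Finset (DyadicCube d)) :
    ∃ 𝒬' ⊆ insert C (𝒬 \ fineCubes C.k C.carrier 𝒬), coverCost E r 𝒬' ≤ coverCost E r 𝒬 := by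
  set 𝒮 := fineCubes C.k C.carrier 𝒬
  have hS : ∀ Q ∈ 𝒮, Q.carrier ⊆ C.carrier := fun Q hQ => by
    obtain ⟨-, hk, hQC⟩ := mem_fineCubes.1 hQ
    obtain ⟨y, hyQ, hyC⟩ := not_disjoint_iff.1 hQC
    exact carrier_subset_of_mem_of_mem hk.le hyQ hyC
  by_cases hA : Disjoint C.carrier (⋃ Q ∈ 𝒬 \ 𝒮, Q.carrier)
  · refine ⟨_, subset_rfl, coverCost_insert_sdiff_le hE hd hr hCE h2r fineCubes_subset
      (fun Q hQ => zpow_le_zpow_right₀ one_le_two (mem_fineCubes.1 hQ).2.1.le)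
      (iUnion₂_subset hS) hA⟩
  · refine ⟨𝒬 \ 𝒮, Finset.subset_insert _ _, coverCost_le_of_subset hr Finset.sdiff_subset ?_⟩
    obtain ⟨y, hyC, hyA⟩ := not_disjoint_iff.1 hA
    obtain ⟨Q', hQ', hyQ'⟩ := mem_iUnion₂.1 hyA
    obtain ⟨hQ'𝒬, hQ'S⟩ := Finset.mem_sdiff.1 hQ'
    have hk : C.k ≤ Q'.k := not_lt.1 fun hk =>
      hQ'S (mem_fineCubes.2 ⟨hQ'𝒬, hk, not_disjoint_iff.2 ⟨y, hyQ', hyC⟩⟩)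
    have hCQ' := carrier_subset_of_mem_of_mem hk hyC hyQ'
    intro z hz
    obtain ⟨Q, hQ, hzQ⟩ := mem_iUnion₂.1 hz
    by_cases hQS : Q ∈ 𝒮
    · exact mem_biUnion hQ' (hCQ' (hS Q hQS hzQ))
    · exact mem_biUnion (Finset.mem_sdiff.2 ⟨hQ, hQS⟩) hzQ

lemma exists_coverCost_le_fineCubes_ssubset (hE : volume E ≠ ⊤) (hd : 0 < d) (hr : 0 ≤ r)
    {k₀ : ℤ} (hk₀ : ∀ x ∈ E, (cubeAt k₀ x).carrier ⊆ E) (h2r : 2 * r ≤ ((2 : ℝ) ^ k₀) ^ (d - 1))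
    {𝒬 : Finset (DyadicCube d)} (hne : (fineCubes k₀ E 𝒬).Nonempty) :
    ∃ 𝒬', coverCost E r 𝒬' ≤ coverCost E r 𝒬 ∧ fineCubes k₀ E 𝒬' ⊂ fineCubes k₀ E 𝒬 := by
  obtain ⟨Q₀, hQ₀⟩ := hne
  obtain ⟨hQ₀𝒬, hQ₀k, hQ₀E⟩ := mem_fineCubes.1 hQ₀
  obtain ⟨x, hxQ₀, hxE⟩ := not_disjoint_iff.1 hQ₀E
  set C := cubeAt k₀ x
  have hCE : C.carrier ⊆ E := hk₀ x hxE
  obtain ⟨𝒬', h𝒬', hcost⟩ := exists_coverCost_le_subset_insert_sdiff hE hd hr hCE h2r 𝒬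
  refine ⟨𝒬', hcost, Finset.ssubset_of_subset_of_ssubset ?_ (Finset.erase_ssubset hQ₀)⟩
  intro Q hQ
  obtain ⟨hQ𝒬', hk, hQE⟩ := mem_fineCubes.1 hQ
  rcases Finset.mem_insert.1 (h𝒬' hQ𝒬') with rfl | hQ
  · exact absurd hk (lt_irrefl _)
  obtain ⟨hQ𝒬, hQS⟩ := Finset.mem_sdiff.1 hQ
  refine Finset.mem_erase.2 ⟨?_, mem_fineCubes.2 ⟨hQ𝒬, hk, hQE⟩⟩
  rintro rfl
  exact hQS (mem_fineCubes.2 ⟨hQ₀𝒬, hQ₀k, not_disjoint_iff.2 ⟨x, hxQ₀, mem_cubeAt k₀ x⟩⟩)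

lemma exists_coverCost_le_fineCubes_eq_empty (hE : volume E ≠ ⊤) (hd : 0 < d) (hr : 0 ≤ r)
    {k₀ : ℤ} (hk₀ : ∀ x ∈ E, (cubeAt k₀ x).carrier ⊆ E) (h2r : 2 * r ≤ ((2 : ℝ) ^ k₀) ^ (d - 1))
    (𝒬 : Finset (DyadicCube d)) :
    ∃ 𝒬', coverCost E r 𝒬' ≤ coverCost E r 𝒬 ∧ fineCubes k₀ E 𝒬' = ∅ := by
  induction h : fineCubes k₀ E 𝒬 using Finset.strongInduction generalizing 𝒬 with
  | H s ih =>
    rcases s.eq_empty_or_nonempty with rfl | hne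
    · exact ⟨𝒬, le_rfl, h⟩
    obtain ⟨𝒬', h₁, h₂⟩ := exists_coverCost_le_fineCubes_ssubset hE hd hr hk₀ h2r (h ▸ hne)
    obtain ⟨𝒬'', h₃, h₄⟩ := ih _ (h ▸ h₂) 𝒬' rfl
    exact ⟨𝒬'', h₃.trans h₁, h₄⟩

end Exchange

lemma exists_forall_le_of_forall_exists_subset_le {α β : Type*} [LinearOrder β]
    (f : Finset α → β) (F : Finset α) (h : ∀ s, ∃ t ⊆ F, f t ≤ f s) :
    ∃ s₀, ∀ s, f s₀ ≤ f s := by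
  obtain ⟨s₀, -, hs₀⟩ := F.powerset.exists_min_image f ⟨∅, Finset.empty_mem_powerset F⟩
  exact ⟨s₀, fun s => let ⟨t, ht, hts⟩ := h s; (hs₀ t (Finset.mem_powerset.2 ht)).trans hts⟩

section Minimizer

variable {d : ℕ} {E : Set (EuclideanSpace ℝ (Fin d))}

lemma finite_setOf_k_eq_le_volume (hEm : MeasurableSet E) (hE : volume E ≠ ⊤)
    {ε : ENNReal} (hε : 0 < ε) (k : ℤ) :
    {Q : DyadicCube d | Q.k = k ∧ ε ≤ volume (E ∩ Q.carrier)}.Finite := by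
  have hfin := Measure.finite_const_le_meas_of_disjoint_iUnion volume hε
    (As := fun Q : {Q : DyadicCube d // Q.k = k} => E ∩ Q.1.carrier)
    (fun Q => hEm.inter (measurableSet_carrier Q.1))
    (fun Q Q' hne => (disjoint_carrier_of_ne (Q.2.trans Q'.2.symm)
      (Subtype.coe_injective.ne hne)).mono inter_subset_right inter_subset_right)
    (measure_ne_top_of_subset (iUnion_subset fun _ => inter_subset_left) hE)
  refine (hfin.image Subtype.val).subset ?_
  rintro Q ⟨hk, hQ⟩
  exact ⟨⟨Q, hk⟩, hQ, rfl⟩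

/-- The scales of such cubes are bounded above since `2r·l(Q) < |E|`, and at each scale they are
disjoint pieces of `E` of measure more than `2r·l(Q)`. -/
lemma finite_setOf_two_mul_len_lt (hEm : MeasurableSet E) (hE : volume E ≠ ⊤) {r : ℝ}
    (hr : 0 < r) (k₀ : ℤ) :
    {Q : DyadicCube d | k₀ ≤ Q.k ∧ 2 * r * Q.len < volume.real (E ∩ Q.carrier)}.Finite := by
  obtain ⟨n, hn⟩ := pow_unbounded_of_one_lt (volume.real E / (2 * r)) one_lt_two
  refine ((Set.finite_Ico k₀ n).biUnion fun k _ => finite_setOf_k_eq_le_volume hEm hE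
    (ENNReal.ofReal_pos.2 (by positivity : 0 < 2 * r * (2 : ℝ) ^ k)) k).subset ?_
  rintro Q ⟨hk₀, hQ⟩
  refine mem_iUnion₂.2 ⟨Q.k, ⟨hk₀, ?_⟩, rfl, ENNReal.ofReal_le_of_le_toReal hQ.le⟩
  have hEQ : volume.real (E ∩ Q.carrier) ≤ volume.real E := measureReal_mono inter_subset_left hE
  rw [div_lt_iff₀ (by positivity)] at hn
  have : 2 * r * (2 : ℝ) ^ Q.k < 2 * r * 2 ^ (n : ℤ) := by
    rw [zpow_natCast]
    exact hQ.trans_le (hEQ.trans (hn.trans_eq (mul_comm _ _)).le)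
  exact (zpow_lt_zpow_iff_right₀ one_lt_two).1 (lt_of_mul_lt_mul_left this (by positivity))

lemma volume_real_inter_carrier_le (hd : 0 < d) {Q : DyadicCube d} {c : ℝ} (hQ : Q.len ≤ c) :
    volume.real (E ∩ Q.carrier) ≤ c ^ (d - 1) * Q.len :=
  (measureReal_mono inter_subset_right (volume_carrier_ne_top Q)).trans
    ((volume_carrier_toReal Q).trans_le (len_pow_le_mul hd hQ))

namespace Granular

lemma measurableSet (hE : Granular E) : MeasurableSet E := by
  obtain ⟨𝒬, rfl⟩ := hE
  exact measurableSet_biUnion_carrier 𝒬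

lemma volume_ne_top (hE : Granular E) : volume E ≠ ⊤ := by
  obtain ⟨𝒬, rfl⟩ := hE
  exact volume_biUnion_carrier_ne_top 𝒬

lemma exists_cubeAt_subset (hE : Granular E) : ∃ k₀ : ℤ, ∀ x ∈ E, (cubeAt k₀ x).carrier ⊆ E := by
  obtain ⟨𝒬, rfl⟩ := hE
  obtain ⟨k₀, hk₀⟩ := (𝒬.image DyadicCube.k).bddBelow
  refine ⟨k₀, fun x hx => ?_⟩
  obtain ⟨Q, hQ, hxQ⟩ := mem_iUnion₂.1 hx
  exact (carrier_subset_of_mem_of_mem (hk₀ (Finset.mem_image_of_mem _ hQ)) (mem_cubeAt k₀ x)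
    hxQ).trans (subset_biUnion_of_mem hQ)

end Granular

theorem exists_forall_coverCost_le (hd : 0 < d) (hE : Granular E) {r : ℝ} (hr : 0 < r) :
    ∃ 𝒬₁, ∀ 𝒬, coverCost E r 𝒬₁ ≤ coverCost E r 𝒬 := by
  classical
  obtain ⟨k₀, hk₀⟩ := hE.exists_cubeAt_subset
  have hF := finite_setOf_two_mul_len_lt hE.measurableSet hE.volume_ne_top hr k₀
  refine exists_forall_le_of_forall_exists_subset_le _ hF.toFinset fun 𝒬 => ?_
  obtain ⟨𝒬', hcost, hcoarse⟩ : ∃ 𝒬', coverCost E r 𝒬' ≤ coverCost E r 𝒬 ∧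
      ∀ Q ∈ 𝒬', 2 * r * Q.len < volume.real (E ∩ Q.carrier) → k₀ ≤ Q.k := by
    by_cases h2r : 2 * r ≤ ((2 : ℝ) ^ k₀) ^ (d - 1)
    · obtain ⟨𝒬', hcost, hfine⟩ :=
        exists_coverCost_le_fineCubes_eq_empty hE.volume_ne_top hd hr.le hk₀ h2r 𝒬
      refine ⟨𝒬', hcost, fun Q hQ hthick => not_lt.1 fun hk => ?_⟩
      have hdisj : Disjoint Q.carrier E := not_not.1 fun h =>
        Finset.notMem_empty Q (hfine ▸ mem_fineCubes.2 ⟨hQ, hk, h⟩)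
      rw [inter_comm, hdisj.inter_eq, measureReal_empty] at hthick
      nlinarith [len_pos Q]
    · refine ⟨𝒬, le_rfl, fun Q _ hthick => not_lt.1 fun hk => h2r ?_⟩
      have hQ := volume_real_inter_carrier_le (E := E) hd
        (zpow_le_zpow_right₀ one_le_two hk.le : Q.len ≤ 2 ^ k₀)
      exact (lt_of_mul_lt_mul_right (hthick.trans_le hQ) (len_pos Q).le).le
  refine ⟨𝒬'.filter fun Q => 2 * r * Q.len < volume.real (E ∩ Q.carrier), fun Q hQ => ?_,
    (coverCost_filter_le hE.volume_ne_top 𝒬' _ fun Q _ h => not_lt.1 h).trans hcost⟩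
  obtain ⟨hQ, hthick⟩ := Finset.mem_filter.1 hQ
  exact hF.mem_toFinset.2 ⟨hcoarse Q hQ hthick, hthick⟩

end Minimizer

lemma dyadicLength_eq_zero_of_fin_zero (E : Set (EuclideanSpace ℝ (Fin 0))) :
    dyadicLength E = 0 := by
  refine le_antisymm (le_of_forall_pos_le_add fun ε hε => ?_) (dyadicLength_nonneg E)
  obtain ⟨n, hn⟩ := exists_pow_lt_of_lt_one hε one_half_lt_one
  have hcover : E ⊆ ⋃ Q ∈ ({⟨-n, Fin.elim0⟩} : Finset (DyadicCube 0)), Q.carrier :=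
    fun _ _ => mem_biUnion (Finset.mem_singleton_self _) fun i => i.elim0
  calc dyadicLength E ≤ ∑ Q ∈ ({⟨-n, Fin.elim0⟩} : Finset (DyadicCube 0)), Q.len :=
        csInf_le ⟨0, by rintro _ ⟨𝒬, -, rfl⟩; exact sum_len_nonneg 𝒬⟩ ⟨_, hcover, rfl⟩
    _ ≤ 0 + ε := by
        rw [Finset.sum_singleton, len, zero_add, zpow_neg, zpow_natCast, ← inv_pow, ← one_div]
        exact hn.le

theorem criticalThickness_attained_general {d : ℕ} (E : Set (EuclideanSpace ℝ (Fin d)))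
    (hE : Granular E) :
    ∃ 𝒬₁ : Finset (DyadicCube d),
      criticalThickness E * dyadicLength E =
        2 * criticalThickness E * (∑ Q ∈ 𝒬₁, Q.len) +
          (volume (E \ ⋃ Q ∈ 𝒬₁, Q.carrier)).toReal ∧
      thickness (E \ ⋃ Q ∈ 𝒬₁, Q.carrier) ≤ 2 * criticalThickness E := by
  rcases (criticalThickness_nonneg E).eq_or_lt with hϑ | hϑ
  · obtain ⟨𝒬₀, rfl⟩ := hE
    refine ⟨𝒬₀, ?_, ?_⟩ <;> rw [← hϑ, sdiff_self]
    · simp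
    · exact Real.sSup_le (by rintro _ ⟨Q, rfl⟩; simp) (by norm_num)
  · have hL := dyadicLength_pos_of_criticalThickness_pos E hϑ
    have hd : 0 < d := Nat.pos_of_ne_zero fun hd => by
      subst hd
      exact hL.ne' (dyadicLength_eq_zero_of_fin_zero E)
    obtain ⟨𝒬₁, hmin⟩ := exists_forall_coverCost_le hd hE hϑ
    exact ⟨𝒬₁, criticalThickness_mul_dyadicLength_eq E hL hmin,
      thickness_sdiff_le_of_forall_coverCost_le E hE.volume_ne_top hϑ.le hmin⟩

/-- for a nonempty granular set `E` there is a finite collection `𝒬₁` of dyadic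
cubes attaining the critical thickness, i.e.
`ϑ(E)·λ(E) = 2ϑ(E)·∑_{Q ∈ 𝒬₁} l(Q) + |E \ ∪_{Q ∈ 𝒬₁} Q|`, and the set
`E_* = E \ ∪_{Q ∈ 𝒬₁} Q` satisfies `Θ(E_*) ≤ 2ϑ(E)`. -/
theorem criticalThickness_attained {d : ℕ} (E : Set (EuclideanSpace ℝ (Fin d)))
    (hE : Granular E) (hne : E.Nonempty) :
    ∃ 𝒬₁ : Finset (DyadicCube d),
      criticalThickness E * dyadicLength E =
        2 * criticalThickness E * (∑ Q ∈ 𝒬₁, Q.len) +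
          (volume (E \ ⋃ Q ∈ 𝒬₁, Q.carrier)).toReal ∧
      thickness (E \ ⋃ Q ∈ 𝒬₁, Q.carrier) ≤ 2 * criticalThickness E :=
  criticalThickness_attained_general E hE
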